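/- arXiv:2405.16977 — 6 statements merged into one kernel-verified Lean document; each statement's English description precedes it below -/
import Mathlib

section
/- Let (X,d) be a metric space with d≤1 and F a family of continuous selfmaps such that F^n is pointwise equicontinuous for each n∈ℕ. Fix ε>0 and let ρ(x,y) = d(x,y) + Σ_{n=1}^∞ sup{d(f(x),f(y)) : f∈F^n}/(1+ε)^n. Then ρ is topologically equivalent to d, i.e., x_k→x in (X,d) if and only if ρ(x_k,x)→0. -/
open Metric Filter Topology

variable {X : Type*}

/-- A family `F` of selfmaps is uniformly equicontinuous. -/
def UnifEquicont [MetricSpace X] (F : Set (X → X)) : Prop :=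
  ∀ ε : ℝ, 0 < ε → ∃ δ : ℝ, 0 < δ ∧ ∀ x y : X, dist x y < δ → ∀ f ∈ F, dist (f x) (f y) < ε

/-- A family `F` of selfmaps is pointwise equicontinuous. -/
def PtEquicont [MetricSpace X] (F : Set (X → X)) : Prop :=
  ∀ x : X, ∀ ε : ℝ, 0 < ε →
    ∃ δ : ℝ, 0 < δ ∧ ∀ y : X, dist x y < δ → ∀ f ∈ F, dist (f x) (f y) < ε

/-- `famPow F n` is the family `F^n` of `n`-fold compositions of members of `F`. -/
def famPow (F : Set (X → X)) : ℕ → Set (X → X)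
  | 0 => {id}
  | n + 1 => {h | ∃ f ∈ F, ∃ g ∈ famPow F n, h = f ∘ g}

/-- The metric `ρ(x,y) = d(x,y) + Σₙ sup{d(f x, f y) : f ∈ F^n}/(1+ε)^n`. -/
noncomputable def rho [MetricSpace X] (F : Set (X → X)) (ε : ℝ) (x y : X) : ℝ :=
  dist x y + ∑' n : ℕ, (⨆ f ∈ famPow F (n + 1), dist (f x) (f y)) / (1 + ε) ^ (n + 1)

/-- `ρ` is a metric on `X`. -/
def IsMetric (ρ : X → X → ℝ) : Prop :=
  (∀ x, ρ x x = 0) ∧ (∀ x y, ρ x y = 0 → x = y) ∧ (∀ x y, ρ x y = ρ y x) ∧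
    (∀ x y z, ρ x z ≤ ρ x y + ρ y z)

section DistSup

variable [MetricSpace X]

lemma iSup_dist_nonneg (S : Set (X → X)) (x y : X) : 0 ≤ ⨆ f ∈ S, dist (f x) (f y) :=
  Real.iSup_nonneg fun _ => Real.iSup_nonneg fun _ => dist_nonneg

lemma iSup_dist_le {S : Set (X → X)} {x y : X} {c : ℝ} (hc : 0 ≤ c)
    (h : ∀ f ∈ S, dist (f x) (f y) ≤ c) : ⨆ f ∈ S, dist (f x) (f y) ≤ c :=
  Real.iSup_le (fun f => Real.iSup_le (h f) hc) hc

lemma PtEquicont.tendsto_iSup_dist {ι : Type*} {l : Filter ι} {S : Set (X → X)}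
    (hS : PtEquicont S) {u : ι → X} {x : X} (hu : Tendsto u l (𝓝 x)) :
    Tendsto (fun k => ⨆ f ∈ S, dist (f (u k)) (f x)) l (𝓝 0) := by
  rw [Metric.tendsto_nhds]
  intro η hη
  obtain ⟨δ, hδ, hS⟩ := hS x (η / 2) (half_pos hη)
  filter_upwards [hu (ball_mem_nhds x hδ)] with k hk
  have hsup : ⨆ f ∈ S, dist (f (u k)) (f x) ≤ η / 2 :=
    iSup_dist_le (half_pos hη).le fun f hf => by
      rw [dist_comm]
      exact (hS (u k) (mem_ball'.mp hk) f hf).le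
  rw [Real.dist_eq, sub_zero, abs_of_nonneg (iSup_dist_nonneg S _ _)]
  linarith

end DistSup

lemma summable_inv_pow_succ {ε : ℝ} (hε : 0 < ε) :
    Summable fun n : ℕ => (1 + ε)⁻¹ ^ (n + 1) :=
  (summable_nat_add_iff 1).mpr <| summable_geometric_of_lt_one (by positivity)
    (inv_lt_one_of_one_lt₀ (by linarith))

theorem rho_equiv_general [MetricSpace X] (F : Set (X → X)) (ε : ℝ)
    (hd : ∀ x y : X, dist x y ≤ 1)
    (hF : ∀ n : ℕ, 0 < n → PtEquicont (famPow F n)) (hε : 0 < ε) :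
    ∀ (u : ℕ → X) (x : X),
      Filter.Tendsto u Filter.atTop (nhds x) ↔
        Filter.Tendsto (fun k => rho F ε (u k) x) Filter.atTop (nhds 0) := by
  intro u x
  have hterm_nonneg (y : X) (n : ℕ) :
      0 ≤ (⨆ f ∈ famPow F (n + 1), dist (f y) (f x)) / (1 + ε) ^ (n + 1) :=
    div_nonneg (iSup_dist_nonneg _ _ _) (by positivity)
  constructor
  · intro hu
    -- Tannery: `d ≤ 1` bounds the `n`-th term by `(1 + ε)⁻¹ ^ (n + 1)`.
    have htail : Tendsto (fun k => ∑' n : ℕ,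
        (⨆ f ∈ famPow F (n + 1), dist (f (u k)) (f x)) / (1 + ε) ^ (n + 1)) atTop (𝓝 0) := by
      simpa using tendsto_tsum_of_dominated_convergence (summable_inv_pow_succ hε)
        (fun n => ((hF (n + 1) n.succ_pos).tendsto_iSup_dist hu).div_const _)
        (Eventually.of_forall fun k n => by
          rw [Real.norm_of_nonneg (hterm_nonneg _ n), inv_pow, ← one_div]
          gcongr
          exact iSup_dist_le zero_le_one fun _ _ => hd _ _)
    simpa [rho] using (tendsto_iff_dist_tendsto_zero.mp hu).add htail
  · intro hρ
    refine tendsto_iff_dist_tendsto_zero.mpr <|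
      squeeze_zero (fun _ => dist_nonneg) (fun k => ?_) hρ
    exact le_add_of_nonneg_right (tsum_nonneg (hterm_nonneg (u k)))

theorem rho_equiv [MetricSpace X] (F : Set (X → X)) (ε : ℝ)
    (hd : ∀ x y : X, dist x y ≤ 1) (hFc : ∀ f ∈ F, Continuous f)
    (hF : ∀ n : ℕ, 0 < n → PtEquicont (famPow F n)) (hε : 0 < ε) :
    ∀ (u : ℕ → X) (x : X),
      Filter.Tendsto u Filter.atTop (nhds x) ↔
        Filter.Tendsto (fun k => rho F ε (u k) x) Filter.atTop (nhds 0) :=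
  rho_equiv_general F ε hd hF hε
end

section
/- Let (X,d) be a metric space with d≤1, ε>0, and F a family of continuous selfmaps such that each F^n is pointwise equicontinuous. Define ρ(x,y) = d(x,y) + Σ_{n=1}^∞ sup{d(f(x),f(y)) : f∈F^n}/(1+ε)^n. Then every g∈F satisfies ρ(g(x),g(y)) ≤ (1+ε)·ρ(x,y) for all x,y∈X, i.e., g is (1+ε)-Lipschitz with respect to ρ. -/
open Metric Filter Topology

variable {X : Type*}

/-! Write `ρ(x, y) = Σ_{n ≥ 0} δₙ(x, y) / (1 + ε)ⁿ` with `δₙ(x, y) = sup {d(f x, f y) : f ∈ Fⁿ}`,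
so that `δ₀ = d`. Since `h ∘ g ∈ Fⁿ⁺¹` for `h ∈ Fⁿ`, we get `δₙ(g x, g y) ≤ δₙ₊₁(x, y)`: the series for
`(g x, g y)` is dominated termwise by the shifted series for `(x, y)`, which is at most `(1 + ε)`
times the original one. The bound `d ≤ 1` makes all these series converge. -/

theorem mem_famPow_one {F : Set (X → X)} {g : X → X} (hg : g ∈ F) : g ∈ famPow F 1 :=
  ⟨g, hg, id, rfl, rfl⟩

theorem comp_mem_famPow_succ {F : Set (X → X)} {g : X → X} (hg : g ∈ F) :
    ∀ {n : ℕ} {h : X → X}, h ∈ famPow F n → h ∘ g ∈ famPow F (n + 1)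
  | 0, _, rfl => mem_famPow_one hg
  | _ + 1, _, ⟨f, hf, h', hh', rfl⟩ => ⟨f, hf, h' ∘ g, comp_mem_famPow_succ hg hh', rfl⟩

section SeriesBounds

variable {r C : ℝ} {a b : ℕ → ℝ}

theorem summable_div_pow_of_bounded (hr : 1 < r) (ha₀ : ∀ n, 0 ≤ a n) (haC : ∀ n, a n ≤ C) :
    Summable fun n => a n / r ^ n := by
  have hr₀ : 0 < r := zero_lt_one.trans hr
  refine .of_nonneg_of_le (fun n => div_nonneg (ha₀ n) (pow_nonneg hr₀.le n)) (fun n => ?_)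
    ((summable_geometric_of_lt_one (inv_nonneg.2 hr₀.le) (inv_lt_one_of_one_lt₀ hr)).mul_left C)
  rw [inv_pow, ← div_eq_mul_inv]
  exact div_le_div_of_nonneg_right (haC n) (pow_nonneg hr₀.le n)

theorem tsum_div_pow_le_mul_of_le_succ (hr : 1 < r) (ha₀ : ∀ n, 0 ≤ a n) (haC : ∀ n, a n ≤ C)
    (hb₀ : ∀ n, 0 ≤ b n) (hba : ∀ n, b n ≤ a (n + 1)) :
    ∑' n, b n / r ^ n ≤ r * ∑' n, a n / r ^ n := by
  have hr₀ : 0 < r := zero_lt_one.trans hr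
  have ha := summable_div_pow_of_bounded hr ha₀ haC
  have ha_succ : Summable fun n => a (n + 1) / r ^ (n + 1) := (summable_nat_add_iff 1).2 ha
  calc ∑' n, b n / r ^ n
      ≤ ∑' n, r * (a (n + 1) / r ^ (n + 1)) := by
        refine Summable.tsum_le_tsum (fun n => ?_)
          (summable_div_pow_of_bounded hr hb₀ fun n => (hba n).trans (haC _))
          (ha_succ.mul_left r)
        exact (div_le_div_of_nonneg_right (hba n) (pow_nonneg hr₀.le n)).trans_eq
          (by field_simp; ring)
    _ = r * ∑' n, a (n + 1) / r ^ (n + 1) := tsum_mul_left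
    _ ≤ r * ∑' n, a n / r ^ n := by
        rw [tsum_eq_zero_add' (f := fun n => a n / r ^ n) ha_succ, pow_zero, div_one]
        exact mul_le_mul_of_nonneg_left (le_add_of_nonneg_left (ha₀ 0)) hr₀.le

end SeriesBounds

section FamDist

variable [MetricSpace X] {F : Set (X → X)} {C : ℝ}

noncomputable def famDist (F : Set (X → X)) (n : ℕ) (x y : X) : ℝ :=
  ⨆ f ∈ famPow F n, dist (f x) (f y)

theorem famDist_zero (x y : X) : famDist F 0 x y = dist x y :=
  le_antisymm (Real.iSup_le (fun _ => Real.iSup_le (fun h => h ▸ le_rfl) dist_nonneg) dist_nonneg)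
    (le_ciSup₂ (f := fun f (_ : f ∈ famPow F 0) => dist (f x) (f y))
      ⟨dist x y, by rintro _ ⟨_, ⟨_, rfl⟩, ⟨rfl, rfl⟩⟩; rfl⟩ id rfl)

theorem famDist_nonneg (n : ℕ) (x y : X) : 0 ≤ famDist F n x y :=
  Real.iSup_nonneg fun _ => Real.iSup_nonneg fun _ => dist_nonneg

theorem famDist_le (hC : ∀ x y : X, dist x y ≤ C) (n : ℕ) (x y : X) : famDist F n x y ≤ C :=
  have hC₀ : 0 ≤ C := dist_nonneg.trans (hC x x)
  Real.iSup_le (fun _ => Real.iSup_le (fun _ => hC _ _) hC₀) hC₀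

theorem dist_le_famDist (hC : ∀ x y : X, dist x y ≤ C) {n : ℕ} {f : X → X} (hf : f ∈ famPow F n)
    (x y : X) : dist (f x) (f y) ≤ famDist F n x y :=
  le_ciSup₂ (f := fun f (_ : f ∈ famPow F n) => dist (f x) (f y))
    ⟨C, by rintro _ ⟨_, ⟨g, rfl⟩, ⟨_, rfl⟩⟩; exact hC _ _⟩ f hf

theorem famDist_comp_le (hC : ∀ x y : X, dist x y ≤ C) {g : X → X} (hg : g ∈ F) (n : ℕ)
    (x y : X) : famDist F n (g x) (g y) ≤ famDist F (n + 1) x y :=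
  Real.iSup_le
    (fun _ => Real.iSup_le (fun hf => dist_le_famDist hC (comp_mem_famPow_succ hg hf) x y)
      (famDist_nonneg _ _ _))
    (famDist_nonneg _ _ _)

theorem rho_eq_tsum_famDist (hC : ∀ x y : X, dist x y ≤ C) {ε : ℝ} (hε : 0 < ε) (x y : X) :
    rho F ε x y = ∑' n, famDist F n x y / (1 + ε) ^ n := by
  rw [tsum_eq_zero_add' ((summable_nat_add_iff 1).2 (summable_div_pow_of_bounded (by linarith)
    (famDist_nonneg · x y) (famDist_le hC · x y))), famDist_zero, pow_zero, div_one]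
  rfl

end FamDist

theorem rho_lipschitz_general [MetricSpace X] (F : Set (X → X)) (ε : ℝ)
    (hd : ∀ x y : X, dist x y ≤ 1) (hε : 0 < ε) :
    ∀ g ∈ F, ∀ x y : X, rho F ε (g x) (g y) ≤ (1 + ε) * rho F ε x y := by
  intro g hg x y
  rw [rho_eq_tsum_famDist hd hε, rho_eq_tsum_famDist hd hε]
  exact tsum_div_pow_le_mul_of_le_succ (by linarith) (famDist_nonneg · x y) (famDist_le hd · x y)
    (famDist_nonneg · _ _) (famDist_comp_le hd hg · x y)

theorem rho_lipschitz [MetricSpace X] (F : Set (X → X)) (ε : ℝ)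
    (hd : ∀ x y : X, dist x y ≤ 1) (hFc : ∀ f ∈ F, Continuous f)
    (hF : ∀ n : ℕ, 0 < n → PtEquicont (famPow F n)) (hε : 0 < ε) :
    ∀ g ∈ F, ∀ x y : X, rho F ε (g x) (g y) ≤ (1 + ε) * rho F ε x y :=
  rho_lipschitz_general F ε hd hε
end

section
/- Let (X,d) be a metric space, f:X→X continuous, and ε>0. Replacing d by d/(d+1) if necessary so that d≤1, define d_{f,ε}(x,y) = d(x,y) + Σ_{n=1}^∞ d(fⁿ(x),fⁿ(y))/(1+ε)^n, where fⁿ is the n-th iterate of f. Then d_{f,ε} is a metric topologically equivalent to d, and f is (1+ε)-Lipschitz with respect to d_{f,ε}. -/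
open Metric Filter Topology

variable {X : Type*}

/-- The metric `d_{f,ε}(x,y) = d(x,y) + Σₙ d(fⁿ x, fⁿ y)/(1+ε)^n`. -/
noncomputable def dfe [MetricSpace X] (f : X → X) (ε : ℝ) (x y : X) : ℝ :=
  dist x y + ∑' n : ℕ, dist (f^[n + 1] x) (f^[n + 1] y) / (1 + ε) ^ (n + 1)

/-! Including `n = 0`, `dfe f ε x y = ∑ₙ d(fⁿ x, fⁿ y) / (1 + ε)ⁿ`, and since `d ≤ 1` the terms are
dominated by the geometric series `(1 + ε)⁻ⁿ`. So `dfe` is a convergent sum of pseudometrics whose first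
term is `d`: it is a metric with `d ≤ dfe`, and by the Weierstrass M-test it is continuous for `d`, which
gives the equivalence of convergence. Replacing `x, y` by `f x, f y` shifts the series by one index,
so `dfe (f x) (f y) = (1 + ε) (dfe x y - d x y)`. -/

section

variable [MetricSpace X] {f : X → X} {ε : ℝ}

lemma dist_iterate_div_pow_le (hd : ∀ x y : X, dist x y ≤ 1) (hε : 0 < ε) (x y : X) (n : ℕ) :
    dist (f^[n] x) (f^[n] y) / (1 + ε) ^ n ≤ (1 / (1 + ε)) ^ n := by
  rw [div_pow, one_pow]
  gcongr
  exact hd _ _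

lemma summable_one_div_one_add_pow (hε : 0 < ε) : Summable fun n : ℕ => (1 / (1 + ε)) ^ n :=
  summable_geometric_of_lt_one (by positivity) ((div_lt_one (by linarith)).2 (by linarith))

lemma summable_dist_iterate_div_pow (hd : ∀ x y : X, dist x y ≤ 1) (hε : 0 < ε) (x y : X) :
    Summable fun n : ℕ => dist (f^[n] x) (f^[n] y) / (1 + ε) ^ n :=
  (summable_one_div_one_add_pow hε).of_nonneg_of_le (fun _ => by positivity)
    (dist_iterate_div_pow_le hd hε x y)

lemma dfe_eq_tsum (hd : ∀ x y : X, dist x y ≤ 1) (hε : 0 < ε) (x y : X) :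
    dfe f ε x y = ∑' n : ℕ, dist (f^[n] x) (f^[n] y) / (1 + ε) ^ n := by
  rw [(summable_dist_iterate_div_pow hd hε x y).tsum_eq_zero_add]
  simp [dfe]

lemma dfe_self (x : X) : dfe f ε x x = 0 := by
  simp [dfe]

lemma dfe_comm (x y : X) : dfe f ε x y = dfe f ε y x := by
  simp [dfe, dist_comm]

lemma dist_le_dfe (hd : ∀ x y : X, dist x y ≤ 1) (hε : 0 < ε) (x y : X) :
    dist x y ≤ dfe f ε x y := by
  rw [dfe_eq_tsum hd hε]
  simpa using (summable_dist_iterate_div_pow hd hε x y).le_tsum 0 (fun _ _ => by positivity)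

lemma eq_of_dfe_eq_zero (hd : ∀ x y : X, dist x y ≤ 1) (hε : 0 < ε) {x y : X}
    (h : dfe f ε x y = 0) : x = y :=
  dist_le_zero.1 (h ▸ dist_le_dfe hd hε x y)

lemma dfe_triangle (hd : ∀ x y : X, dist x y ≤ 1) (hε : 0 < ε) (x y z : X) :
    dfe f ε x z ≤ dfe f ε x y + dfe f ε y z := by
  have hxy := summable_dist_iterate_div_pow (f := f) hd hε x y
  have hyz := summable_dist_iterate_div_pow (f := f) hd hε y z
  simp only [dfe_eq_tsum hd hε, ← hxy.tsum_add hyz]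
  refine (summable_dist_iterate_div_pow hd hε x z).tsum_le_tsum (fun n => ?_) (hxy.add hyz)
  rw [← add_div]
  gcongr
  exact dist_triangle _ _ _

lemma isMetric_dfe (hd : ∀ x y : X, dist x y ≤ 1) (hε : 0 < ε) : IsMetric (dfe f ε) :=
  ⟨dfe_self, fun _ _ => eq_of_dfe_eq_zero hd hε, dfe_comm, dfe_triangle hd hε⟩

lemma continuous_dfe (hd : ∀ x y : X, dist x y ≤ 1) (hf : Continuous f) (hε : 0 < ε) :
    Continuous fun p : X × X => dfe f ε p.1 p.2 := by
  refine (continuous_tsum (fun n => ?_) (summable_one_div_one_add_pow hε) fun n p => ?_).congr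
    fun p => (dfe_eq_tsum hd hε p.1 p.2).symm
  · have hfn := hf.iterate n
    exact ((hfn.comp continuous_fst).dist (hfn.comp continuous_snd)).div_const _
  · rw [Real.norm_of_nonneg (by positivity)]
    exact dist_iterate_div_pow_le hd hε _ _ n

lemma tendsto_iff_dfe_tendsto_zero (hd : ∀ x y : X, dist x y ≤ 1) (hf : Continuous f)
    (hε : 0 < ε) (u : ℕ → X) (x : X) :
    Tendsto u atTop (𝓝 x) ↔ Tendsto (fun k => dfe f ε (u k) x) atTop (𝓝 0) := by
  refine ⟨fun hu => ?_, fun hu => ?_⟩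
  · simpa only [Function.comp_def, dfe_self] using
      ((continuous_dfe hd hf hε).tendsto (x, x)).comp (hu.prodMk_nhds tendsto_const_nhds)
  · exact tendsto_iff_dist_tendsto_zero.2 <|
      squeeze_zero (fun _ => dist_nonneg) (fun k => dist_le_dfe hd hε (u k) x) hu

lemma dfe_apply_apply (hd : ∀ x y : X, dist x y ≤ 1) (hε : 0 < ε) (x y : X) :
    dfe f ε (f x) (f y) = (1 + ε) * (dfe f ε x y - dist x y) := by
  rw [dfe_eq_tsum hd hε, dfe, add_sub_cancel_left, ← tsum_mul_left]
  refine tsum_congr fun n => ?_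
  rw [← Function.iterate_succ_apply, ← Function.iterate_succ_apply, pow_succ']
  field_simp

lemma dfe_apply_apply_le (hd : ∀ x y : X, dist x y ≤ 1) (hε : 0 < ε) (x y : X) :
    dfe f ε (f x) (f y) ≤ (1 + ε) * dfe f ε x y := by
  rw [dfe_apply_apply hd hε]
  gcongr
  exact sub_le_self _ dist_nonneg

end

theorem dfe_metric_equiv_lipschitz [MetricSpace X] (f : X → X) (ε : ℝ)
    (hd : ∀ x y : X, dist x y ≤ 1) (hf : Continuous f) (hε : 0 < ε) :
    IsMetric (dfe f ε) ∧
      (∀ (u : ℕ → X) (x : X),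
        Filter.Tendsto u Filter.atTop (nhds x) ↔
          Filter.Tendsto (fun k => dfe f ε (u k) x) Filter.atTop (nhds 0)) ∧
      ∀ x y : X, dfe f ε (f x) (f y) ≤ (1 + ε) * dfe f ε x y :=
  ⟨isMetric_dfe hd hε, tendsto_iff_dfe_tendsto_zero hd hf hε, dfe_apply_apply_le hd hε⟩
end

section
/- Suppose (X,d) is a metric space and F = {f₁,…,fₙ} is a finite family of continuous selfmaps of X (an IFS). Then for any ε>0 there is a metric d_ε on X, topologically equivalent to d, such that every fᵢ is (1+ε)-Lipschitz with respect to d_ε. -/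
open Metric Filter Topology

variable {X : Type*}

/-!
Measure the distance of `x` and `y` by the supremum, over all words `w` in the maps of the
system, of the truncated distance `min (d (w x) (w y)) 1` damped by `(1 + ε) ^ (-|w|)`.
Precomposing with a letter `f` shifts words by one letter, which costs exactly a factor `1 + ε`.
The empty word gives `min d 1` as a lower bound, so every `d`-open set is open for the new metric.
Conversely, long words contribute at most `(1 + ε) ^ (-N)` and, the system being finite, there
are finitely many short words, each continuous; hence the new distance is `d`-continuous.
-/

namespace IFS

variable {ι : Type*}

section Words

variable (f : ι → X → X)

/-- The word `[i₁, …, iₙ]` acts as `f iₙ ∘ ⋯ ∘ f i₁`. -/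
def wordEval (w : List ι) (x : X) : X := w.foldl (fun y i => f i y) x

@[simp] lemma wordEval_nil (x : X) : wordEval f [] x = x := rfl

@[simp] lemma wordEval_cons (i : ι) (w : List ι) (x : X) :
    wordEval f (i :: w) x = wordEval f w (f i x) := rfl

lemma continuous_wordEval [TopologicalSpace X] {f : ι → X → X} (hf : ∀ i, Continuous (f i))
    (w : List ι) : Continuous (wordEval f w) := by
  induction w with
  | nil => exact continuous_id
  | cons i w ih => exact ih.comp (hf i)

end Words

lemma min_one_le_add {a b d : ℝ} (h : a ≤ b + d) (hb : 0 ≤ b) (hd : 0 ≤ d) :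
    min a 1 ≤ min b 1 + min d 1 := by
  simp only [min_def]
  split_ifs <;> linarith

section PseudoMetric

variable [PseudoMetricSpace X] (f : ι → X → X) (c : ℝ)

noncomputable def ifsDist (x y : X) : ℝ :=
  ⨆ w : List ι, min (dist (wordEval f w x) (wordEval f w y)) 1 / c ^ w.length

variable {f c}

lemma ifsDist_term_le_one (hc : 1 ≤ c) (w : List ι) (x y : X) :
    min (dist (wordEval f w x) (wordEval f w y)) 1 / c ^ w.length ≤ 1 :=
  div_le_one_of_le₀ ((min_le_right _ _).trans (one_le_pow₀ hc)) (pow_nonneg (by linarith) _)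

lemma le_ifsDist (hc : 1 ≤ c) (w : List ι) (x y : X) :
    min (dist (wordEval f w x) (wordEval f w y)) 1 / c ^ w.length ≤ ifsDist f c x y :=
  le_ciSup ⟨1, Set.forall_mem_range.mpr fun w => ifsDist_term_le_one hc w x y⟩ w

lemma min_dist_one_le_ifsDist (hc : 1 ≤ c) (x y : X) : min (dist x y) 1 ≤ ifsDist f c x y := by
  simpa using le_ifsDist hc [] x y

lemma ifsDist_nonneg (hc : 1 ≤ c) (x y : X) : 0 ≤ ifsDist f c x y :=
  (le_min dist_nonneg zero_le_one).trans (min_dist_one_le_ifsDist hc x y)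

variable (f c) in
lemma ifsDist_self (x : X) : ifsDist f c x x = 0 :=
  le_antisymm (Real.iSup_le (fun w => by simp) le_rfl)
    (Real.iSup_nonneg fun w => by simp)

variable (f c) in
lemma ifsDist_comm (x y : X) : ifsDist f c x y = ifsDist f c y x := by
  simp only [ifsDist, dist_comm]

lemma ifsDist_triangle (hc : 1 ≤ c) (x y z : X) :
    ifsDist f c x z ≤ ifsDist f c x y + ifsDist f c y z := by
  refine Real.iSup_le (fun w => ?_) (add_nonneg (ifsDist_nonneg hc x y) (ifsDist_nonneg hc y z))
  calc min (dist (wordEval f w x) (wordEval f w z)) 1 / c ^ w.length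
      ≤ (min (dist (wordEval f w x) (wordEval f w y)) 1 +
          min (dist (wordEval f w y) (wordEval f w z)) 1) / c ^ w.length :=
        div_le_div_of_nonneg_right (min_one_le_add (dist_triangle _ _ _) dist_nonneg dist_nonneg)
          (pow_nonneg (by linarith) _)
    _ = min (dist (wordEval f w x) (wordEval f w y)) 1 / c ^ w.length +
        min (dist (wordEval f w y) (wordEval f w z)) 1 / c ^ w.length := add_div _ _ _
    _ ≤ ifsDist f c x y + ifsDist f c y z :=
        add_le_add (le_ifsDist hc w x y) (le_ifsDist hc w y z)

lemma ifsDist_apply_le (hc : 1 ≤ c) (i : ι) (x y : X) :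
    ifsDist f c (f i x) (f i y) ≤ c * ifsDist f c x y := by
  have hc₀ : 0 < c := by linarith
  refine Real.iSup_le (fun w => ?_) (mul_nonneg hc₀.le (ifsDist_nonneg hc x y))
  calc min (dist (wordEval f w (f i x)) (wordEval f w (f i y))) 1 / c ^ w.length
      = c * (min (dist (wordEval f (i :: w) x) (wordEval f (i :: w) y)) 1 /
          c ^ (i :: w).length) := by
        simp only [wordEval_cons, List.length_cons, pow_succ]
        field_simp
    _ ≤ c * ifsDist f c x y := mul_le_mul_of_nonneg_left (le_ifsDist hc _ x y) hc₀.le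

lemma ifsDist_le_of_forall_length_le (hc : 1 ≤ c) {x y : X} {N : ℕ} {η : ℝ}
    (hN : (c ^ N)⁻¹ ≤ η)
    (hshort : ∀ w : List ι, w.length ≤ N → dist (wordEval f w x) (wordEval f w y) ≤ η) :
    ifsDist f c x y ≤ η := by
  have hpow : ∀ n, 0 < c ^ n := fun n => pow_pos (by linarith) n
  refine Real.iSup_le (fun w => ?_) ((inv_nonneg.mpr (hpow N).le).trans hN)
  rcases le_or_gt w.length N with hlen | hlen
  · calc min (dist (wordEval f w x) (wordEval f w y)) 1 / c ^ w.length
        ≤ min (dist (wordEval f w x) (wordEval f w y)) 1 :=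
          div_le_self (le_min dist_nonneg zero_le_one) (one_le_pow₀ hc)
      _ ≤ η := (min_le_left _ _).trans (hshort w hlen)
  · calc min (dist (wordEval f w x) (wordEval f w y)) 1 / c ^ w.length
        ≤ 1 / c ^ w.length := by gcongr; exact min_le_right _ _
      _ ≤ (c ^ N)⁻¹ := by
          rw [one_div]
          exact inv_anti₀ (hpow N) (pow_le_pow_right₀ hc hlen.le)
      _ ≤ η := hN

lemma tendsto_ifsDist [Finite ι] (hf : ∀ i, Continuous (f i)) (hc : 1 < c) (x : X) :
    Tendsto (ifsDist f c x) (𝓝 x) (𝓝 0) := by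
  refine Metric.tendsto_nhds.mpr fun η hη => ?_
  obtain ⟨N, hN⟩ := exists_pow_lt_of_lt_one (half_pos hη) (inv_lt_one_of_one_lt₀ hc)
  have hshort : ∀ᶠ y in 𝓝 x, ∀ w ∈ {w : List ι | w.length ≤ N},
      dist (wordEval f w y) (wordEval f w x) < η / 2 :=
    (List.finite_length_le ι N).eventually_all.mpr fun w _ =>
      Metric.tendsto_nhds.mp ((continuous_wordEval hf w).tendsto x) _ (half_pos hη)
  filter_upwards [hshort] with y hy
  have hle : ifsDist f c x y ≤ η / 2 :=
    ifsDist_le_of_forall_length_le hc.le (by rw [← inv_pow]; exact hN.le)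
      fun w hw => by rw [dist_comm]; exact (hy w hw).le
  rw [Real.dist_eq, sub_zero, abs_of_nonneg (ifsDist_nonneg hc.le x y)]
  linarith

lemma isOpen_iff_ifsDist [Finite ι] (hf : ∀ i, Continuous (f i)) (hc : 1 < c) (s : Set X) :
    IsOpen s ↔ ∀ x ∈ s, ∃ r > 0, ∀ y, ifsDist f c x y < r → y ∈ s := by
  constructor
  · intro hs x hx
    obtain ⟨r, hr, hball⟩ := Metric.isOpen_iff.mp hs x hx
    refine ⟨min r 1, lt_min hr one_pos, fun y hy => hball ?_⟩
    rw [Metric.mem_ball, dist_comm]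
    by_contra! hr
    exact (min_le_min_right 1 hr).not_gt ((min_dist_one_le_ifsDist hc.le x y).trans_lt hy)
  · refine fun hs => isOpen_iff_mem_nhds.mpr fun x hx => ?_
    obtain ⟨r, hr, hsub⟩ := hs x hx
    filter_upwards [(tendsto_ifsDist hf hc x).eventually (gt_mem_nhds hr)] using hsub

end PseudoMetric

lemma eq_of_ifsDist_eq_zero [MetricSpace X] {f : ι → X → X} {c : ℝ} (hc : 1 ≤ c) (x y : X)
    (h : ifsDist f c x y = 0) : x = y := by
  have hmin : min (dist x y) 1 ≤ 0 := h ▸ min_dist_one_le_ifsDist hc x y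
  exact dist_le_zero.mp ((min_le_iff.mp hmin).resolve_right (by norm_num))

end IFS

open IFS in
theorem ifs_exists_equiv_metric_lipschitz [MetricSpace X] (F : Set (X → X)) (ε : ℝ)
    (hfin : F.Finite) (hFc : ∀ f ∈ F, Continuous f) (hε : 0 < ε) :
    ∃ m' : MetricSpace X,
      m'.toUniformSpace.toTopologicalSpace = (inferInstance : TopologicalSpace X) ∧
        ∀ f ∈ F, ∀ x y : X, m'.dist (f x) (f y) ≤ (1 + ε) * m'.dist x y := by
  have : Finite F := hfin.to_subtype
  have hf : ∀ f : F, Continuous (f : X → X) := fun g => hFc g g.2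
  have hc : 1 < 1 + ε := by linarith
  let f : F → X → X := Subtype.val
  refine ⟨MetricSpace.ofDistTopology (ifsDist f (1 + ε)) (ifsDist_self f _) (ifsDist_comm f _)
    (ifsDist_triangle hc.le) (isOpen_iff_ifsDist hf hc) (eq_of_ifsDist_eq_zero hc.le), rfl,
    fun g hg x y => ifsDist_apply_le (f := f) hc.le ⟨g, hg⟩ x y⟩
end

section
/- If (X,d) is a complete metric space and F is a family of continuous selfmaps with each F^n pointwise equicontinuous, then for every ε>0 the metric ρ(x,y)=d'(x,y)+Σ_{n=1}^∞ sup{d'(f(x),f(y)):f∈F^n}/(1+ε)^n, where d'=d/(d+1), is a complete metric on X. -/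
open Metric Filter Topology

variable {X : Type*}

/-- The bounded metric `d' = d/(1+d)`. -/
noncomputable def dprime [MetricSpace X] (x y : X) : ℝ := dist x y / (1 + dist x y)

/-- `ρ(x,y) = d'(x,y) + Σₙ sup{d'(f x, f y) : f ∈ F^n}/(1+ε)^n` where `d' = d/(1+d)`. -/
noncomputable def rho' [MetricSpace X] (F : Set (X → X)) (ε : ℝ) (x y : X) : ℝ :=
  dprime x y + ∑' n : ℕ, (⨆ f ∈ famPow F (n + 1), dprime (f x) (f y)) / (1 + ε) ^ (n + 1)

/-!
A `ρ`-Cauchy sequence is `d'`-Cauchy because `d' ≤ ρ`, hence `d`-Cauchy, hence `d`-convergent to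
some `x`. Pointwise equicontinuity of each `F^n` at `x` makes every term of the series `ρ(u k, x)`
tend to `0`, and the terms are dominated by the summable `(1 + ε)^-(n+1)` since `d' ≤ 1`, so
`ρ(u k, x) → 0` by dominated convergence.
-/

lemma div_one_add_le_div_one_add {a b : ℝ} (ha : 0 ≤ a) (hab : a ≤ b) :
    a / (1 + a) ≤ b / (1 + b) := by
  rw [div_le_div_iff₀ (by linarith) (by linarith)]
  nlinarith

lemma add_div_one_add_add_le {a b : ℝ} (ha : 0 ≤ a) (hb : 0 ≤ b) :
    (a + b) / (1 + (a + b)) ≤ a / (1 + a) + b / (1 + b) := by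
  rw [div_add_div _ _ (by linarith) (by linarith), div_le_div_iff₀ (by linarith) (by positivity)]
  nlinarith [mul_nonneg ha hb, mul_nonneg (mul_nonneg ha hb) (add_nonneg ha hb)]

lemma summable_one_div_pow_succ {a : ℝ} (ha : 1 < a) :
    Summable fun n : ℕ => 1 / a ^ (n + 1) := by
  have hgeom := summable_geometric_of_lt_one (inv_nonneg.2 (by linarith))
    ((inv_lt_one₀ (by linarith)).2 ha)
  simpa only [one_div, inv_pow] using (summable_nat_add_iff 1).mpr hgeom

section dprime

variable [MetricSpace X]

lemma dprime_nonneg (x y : X) : 0 ≤ dprime x y := by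
  unfold dprime; positivity

lemma dprime_le_one (x y : X) : dprime x y ≤ 1 :=
  div_le_one_of_le₀ (by linarith) (by linarith [dist_nonneg (x := x) (y := y)])

lemma dprime_le_dist (x y : X) : dprime x y ≤ dist x y :=
  div_le_self dist_nonneg (by linarith [dist_nonneg (x := x) (y := y)])

lemma dprime_self (x : X) : dprime x x = 0 := by
  simp [dprime]

lemma dprime_comm (x y : X) : dprime x y = dprime y x := by
  simp [dprime, dist_comm]

lemma dprime_eq_zero {x y : X} (h : dprime x y = 0) : x = y := by
  have : dist x y = 0 := by
    simpa [dprime, (by positivity : 1 + dist x y ≠ 0)] using h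
  exact dist_eq_zero.mp this

lemma dprime_triangle (x y z : X) : dprime x z ≤ dprime x y + dprime y z :=
  (div_one_add_le_div_one_add dist_nonneg (dist_triangle x y z)).trans
    (add_div_one_add_add_le dist_nonneg dist_nonneg)

lemma dist_lt_of_dprime_lt {x y : X} {δ : ℝ} (hδ : 0 ≤ δ) (h : dprime x y < δ / (1 + δ)) :
    dist x y < δ :=
  lt_of_not_ge fun hge => h.not_ge (div_one_add_le_div_one_add hδ hge)

end dprime

section dprimeSup

variable [MetricSpace X] (G : Set (X → X))

noncomputable def dprimeSup (x y : X) : ℝ :=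
  ⨆ f ∈ G, dprime (f x) (f y)

lemma dprimeSup_nonneg (x y : X) : 0 ≤ dprimeSup G x y :=
  Real.iSup_nonneg fun _ => Real.iSup_nonneg fun _ => dprime_nonneg _ _

lemma dprimeSup_le {x y : X} {a : ℝ} (ha : 0 ≤ a) (h : ∀ f ∈ G, dprime (f x) (f y) ≤ a) :
    dprimeSup G x y ≤ a :=
  Real.iSup_le (fun f => Real.iSup_le (h f) ha) ha

lemma dprimeSup_le_one (x y : X) : dprimeSup G x y ≤ 1 :=
  dprimeSup_le G zero_le_one fun _ _ => dprime_le_one _ _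

lemma le_dprimeSup {f : X → X} (hf : f ∈ G) (x y : X) : dprime (f x) (f y) ≤ dprimeSup G x y := by
  have hbdd : BddAbove (Set.range fun g : X → X => ⨆ _ : g ∈ G, dprime (g x) (g y)) :=
    ⟨1, Set.forall_mem_range.2 fun _ => Real.iSup_le (fun _ => dprime_le_one _ _) zero_le_one⟩
  calc dprime (f x) (f y) = ⨆ _ : f ∈ G, dprime (f x) (f y) := (ciSup_pos (f := fun _ => dprime (f x) (f y)) hf).symm
    _ ≤ dprimeSup G x y := le_ciSup hbdd f

lemma dprimeSup_self (x : X) : dprimeSup G x x = 0 :=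
  le_antisymm (dprimeSup_le G le_rfl fun _ _ => (dprime_self _).le) (dprimeSup_nonneg G x x)

lemma dprimeSup_comm (x y : X) : dprimeSup G x y = dprimeSup G y x := by
  simp only [dprimeSup, dprime_comm]

lemma dprimeSup_triangle (x y z : X) : dprimeSup G x z ≤ dprimeSup G x y + dprimeSup G y z :=
  dprimeSup_le G (add_nonneg (dprimeSup_nonneg G x y) (dprimeSup_nonneg G y z)) fun f hf =>
    (dprime_triangle _ (f y) _).trans (add_le_add (le_dprimeSup G hf x y) (le_dprimeSup G hf y z))

lemma tendsto_dprimeSup {α : Type*} {l : Filter α} {u : α → X} {x : X} (hG : PtEquicont G)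
    (hu : Tendsto u l (𝓝 x)) : Tendsto (fun k => dprimeSup G (u k) x) l (𝓝 0) := by
  rw [Metric.tendsto_nhds]
  intro η hη
  obtain ⟨δ, hδ, hGδ⟩ := hG x (η / 2) (half_pos hη)
  filter_upwards [Metric.tendsto_nhds.mp hu δ hδ] with k hk
  have hle : dprimeSup G (u k) x ≤ η / 2 := dprimeSup_le G (half_pos hη).le fun f hf =>
    calc dprime (f (u k)) (f x) ≤ dist (f (u k)) (f x) := dprime_le_dist _ _
      _ = dist (f x) (f (u k)) := dist_comm _ _
      _ ≤ η / 2 := (hGδ (u k) (by rwa [dist_comm]) f hf).le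
  rw [Real.dist_eq, sub_zero, abs_of_nonneg (dprimeSup_nonneg G _ _)]
  linarith

end dprimeSup

section seriesMetric

variable [MetricSpace X] (G : ℕ → Set (X → X)) {ε : ℝ}

noncomputable def seriesMetric (ε : ℝ) (x y : X) : ℝ :=
  dprime x y + ∑' n : ℕ, dprimeSup (G n) x y / (1 + ε) ^ (n + 1)

lemma rho'_eq_seriesMetric (F : Set (X → X)) (ε : ℝ) :
    rho' F ε = seriesMetric (fun n => famPow F (n + 1)) ε :=
  rfl

lemma summable_seriesMetric_terms (hε : 0 < ε) (x y : X) :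
    Summable fun n : ℕ => dprimeSup (G n) x y / (1 + ε) ^ (n + 1) :=
  (summable_one_div_pow_succ (by linarith)).of_nonneg_of_le
    (fun n => div_nonneg (dprimeSup_nonneg _ x y) (by positivity))
    (fun n => div_le_div_of_nonneg_right (dprimeSup_le_one _ x y) (by positivity))

lemma dprime_le_seriesMetric (hε : 0 < ε) (x y : X) : dprime x y ≤ seriesMetric G ε x y :=
  le_add_of_nonneg_right <| tsum_nonneg fun n =>
    div_nonneg (dprimeSup_nonneg _ x y) (by positivity)

lemma seriesMetric_self (x : X) : seriesMetric G ε x x = 0 := by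
  simp only [seriesMetric, dprime_self, dprimeSup_self, zero_div, tsum_zero, add_zero]

lemma seriesMetric_comm (x y : X) : seriesMetric G ε x y = seriesMetric G ε y x := by
  simp only [seriesMetric, dprime_comm, dprimeSup_comm]

lemma seriesMetric_triangle (hε : 0 < ε) (x y z : X) :
    seriesMetric G ε x z ≤ seriesMetric G ε x y + seriesMetric G ε y z := by
  have hsum := (summable_seriesMetric_terms G hε x y).tsum_add (summable_seriesMetric_terms G hε y z)
  have htail : ∑' n : ℕ, dprimeSup (G n) x z / (1 + ε) ^ (n + 1) ≤
      ∑' n : ℕ, (dprimeSup (G n) x y / (1 + ε) ^ (n + 1) +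
        dprimeSup (G n) y z / (1 + ε) ^ (n + 1)) :=
    (summable_seriesMetric_terms G hε x z).tsum_le_tsum
      (fun n => by rw [← add_div]; gcongr; exact dprimeSup_triangle _ x y z)
      ((summable_seriesMetric_terms G hε x y).add (summable_seriesMetric_terms G hε y z))
  simp only [seriesMetric]
  linarith [dprime_triangle x y z]

lemma isMetric_seriesMetric (hε : 0 < ε) : IsMetric (seriesMetric G ε : X → X → ℝ) :=
  ⟨seriesMetric_self G, fun x y h => dprime_eq_zero <| le_antisymm
      (h ▸ dprime_le_seriesMetric G hε x y) (dprime_nonneg x y),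
    seriesMetric_comm G, seriesMetric_triangle G hε⟩

lemma cauchySeq_of_seriesMetric (hε : 0 < ε) {u : ℕ → X}
    (hu : ∀ η : ℝ, 0 < η → ∃ N : ℕ, ∀ m ≥ N, ∀ n ≥ N, seriesMetric G ε (u m) (u n) < η) :
    CauchySeq u := by
  refine Metric.cauchySeq_iff.2 fun δ hδ => ?_
  obtain ⟨N, hN⟩ := hu (δ / (1 + δ)) (by positivity)
  exact ⟨N, fun m hm n hn => dist_lt_of_dprime_lt hδ.le
    ((dprime_le_seriesMetric G hε _ _).trans_lt (hN m hm n hn))⟩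

lemma tendsto_seriesMetric (hG : ∀ n, PtEquicont (G n)) (hε : 0 < ε) {α : Type*}
    {l : Filter α} {u : α → X} {x : X} (hu : Tendsto u l (𝓝 x)) :
    Tendsto (fun k => seriesMetric G ε (u k) x) l (𝓝 0) := by
  have hdprime : Tendsto (fun k => dprime (u k) x) l (𝓝 0) :=
    squeeze_zero (fun _ => dprime_nonneg _ _) (fun _ => dprime_le_dist _ _)
      ((tendsto_iff_dist_tendsto_zero).1 hu)
  have hseries : Tendsto (fun k => ∑' n : ℕ, dprimeSup (G n) (u k) x / (1 + ε) ^ (n + 1)) l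
      (𝓝 (∑' _ : ℕ, (0 : ℝ))) :=
    tendsto_tsum_of_dominated_convergence (summable_one_div_pow_succ (by linarith : 1 < 1 + ε))
      (fun n => by simpa using (tendsto_dprimeSup (G n) (hG n) hu).div_const ((1 + ε) ^ (n + 1)))
      (Eventually.of_forall fun k n => by
        rw [Real.norm_of_nonneg (div_nonneg (dprimeSup_nonneg _ _ _) (by positivity))]
        exact div_le_div_of_nonneg_right (dprimeSup_le_one _ _ _) (by positivity))
  simpa [seriesMetric] using hdprime.add hseries

end seriesMetric

theorem rho'_complete_metric_general [MetricSpace X] [CompleteSpace X] (F : Set (X → X)) (ε : ℝ)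
    (hF : ∀ n : ℕ, 0 < n → PtEquicont (famPow F n)) (hε : 0 < ε) :
    IsMetric (rho' F ε) ∧
      ∀ u : ℕ → X,
        (∀ η : ℝ, 0 < η → ∃ N : ℕ, ∀ m ≥ N, ∀ n ≥ N, rho' F ε (u m) (u n) < η) →
          ∃ x : X, Filter.Tendsto (fun k => rho' F ε (u k) x) Filter.atTop (nhds 0) := by
  rw [rho'_eq_seriesMetric]
  refine ⟨isMetric_seriesMetric _ hε, fun u hu => ?_⟩
  obtain ⟨x, hx⟩ := cauchySeq_tendsto_of_complete (cauchySeq_of_seriesMetric _ hε hu)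
  exact ⟨x, tendsto_seriesMetric _ (fun n => hF (n + 1) n.succ_pos) hε hx⟩

theorem rho'_complete_metric [MetricSpace X] [CompleteSpace X] (F : Set (X → X)) (ε : ℝ)
    (hFc : ∀ f ∈ F, Continuous f)
    (hF : ∀ n : ℕ, 0 < n → PtEquicont (famPow F n)) (hε : 0 < ε) :
    IsMetric (rho' F ε) ∧
      ∀ u : ℕ → X,
        (∀ η : ℝ, 0 < η → ∃ N : ℕ, ∀ m ≥ N, ∀ n ≥ N, rho' F ε (u m) (u n) < η) →
          ∃ x : X, Filter.Tendsto (fun k => rho' F ε (u k) x) Filter.atTop (nhds 0) :=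
  rho'_complete_metric_general F ε hF hε
end

section
/- Let (X,d) be a metric space with d≤1, ε>0, and F a family of continuous selfmaps with each F^n pointwise equicontinuous. Define ρ(x,y)=d(x,y)+Σ_{k=1}^∞ sup{d(f(x),f(y)):f∈F^k}/(1+ε)^k. Then for every n∈ℕ and every g∈F^n, ρ(g(x),g(y)) ≤ (1+ε)^n·ρ(x,y) for all x,y∈X. -/
open Metric Filter Topology

variable {X : Type*}

/-!
Write `sₖ(x, y) = sup {d(f x, f y) : f ∈ Fᵏ}`. Since `F⁰ = {id}`, `ρ = ∑_{k ≥ 0} sₖ / (1 + ε)ᵏ`.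
For `g ∈ Fⁿ`, precomposition with `g` maps `Fᵏ` into `Fᵏ⁺ⁿ`, so `sₖ(g x, g y) ≤ sₖ₊ₙ(x, y)`, and
`ρ(g x, g y)` is bounded by `(1 + ε)ⁿ` times a tail of the series for `ρ(x, y)`. Boundedness of `d`
keeps the suprema finite and the series summable.
-/

theorem famPow_comp_mem {F : Set (X → X)} {f g : X → X} {k n : ℕ} (hf : f ∈ famPow F k)
    (hg : g ∈ famPow F n) : f ∘ g ∈ famPow F (k + n) := by
  induction k generalizing f with
  | zero =>
    obtain rfl : f = id := hf
    simpa using hg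
  | succ k ih =>
    obtain ⟨f₁, hf₁, f₂, hf₂, rfl⟩ := hf
    rw [Nat.add_right_comm]
    exact ⟨f₁, hf₁, f₂ ∘ g, ih hf₂, rfl⟩

theorem summable_div_pow_of_le {u : ℕ → ℝ} {A C : ℝ} (hu₀ : ∀ k, 0 ≤ u k) (huC : ∀ k, u k ≤ C)
    (hA : 1 < A) : Summable fun k => u k / A ^ k := by
  have hA₀ : 0 < A := one_pos.trans hA
  refine .of_nonneg_of_le (fun k => div_nonneg (hu₀ k) (pow_pos hA₀ k).le) (fun k => ?_)
    ((summable_geometric_of_lt_one (inv_nonneg.2 hA₀.le) (inv_lt_one_of_one_lt₀ hA)).mul_left C)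
  rw [inv_pow, ← div_eq_mul_inv]
  gcongr
  exact huC k

theorem tsum_shift_div_pow_le {u : ℕ → ℝ} {A : ℝ} (hu₀ : ∀ k, 0 ≤ u k)
    (hu : Summable fun k => u k / A ^ k) (hA : 0 < A) (n : ℕ) :
    ∑' k, u (k + n) / A ^ k ≤ A ^ n * ∑' k, u k / A ^ k := by
  have hshift : ∀ k, u (k + n) / A ^ k = A ^ n * (u (k + n) / A ^ (k + n)) := fun k => by
    rw [pow_add]
    field_simp
  rw [tsum_congr hshift, tsum_mul_left]
  refine mul_le_mul_of_nonneg_left ?_ (pow_pos hA n).le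
  exact tsum_comp_le_tsum_of_inj hu (fun k => div_nonneg (hu₀ k) (pow_pos hA k).le)
    (add_left_injective n)

section supDist

variable [MetricSpace X] {F : Set (X → X)} {C : ℝ}

noncomputable def supDist (F : Set (X → X)) (k : ℕ) (x y : X) : ℝ :=
  ⨆ f ∈ famPow F k, dist (f x) (f y)

theorem supDist_zero (x y : X) : supDist F 0 x y = dist x y := by
  have hle : ∀ f : X → X, ⨆ _ : f ∈ famPow F 0, dist (f x) (f y) ≤ dist x y := fun f =>
    Real.iSup_le (fun hf => by rw [show f = id from hf]; rfl) dist_nonneg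
  exact le_antisymm (Real.iSup_le hle dist_nonneg)
    (le_ciSup_of_le ⟨_, Set.forall_mem_range.2 hle⟩ id
      (ciSup_pos (f := fun _ : id ∈ famPow F 0 => dist (id x) (id y)) rfl).ge)

theorem supDist_nonneg (k : ℕ) (x y : X) : 0 ≤ supDist F k x y :=
  Real.iSup_nonneg fun _ => Real.iSup_nonneg fun _ => dist_nonneg

theorem supDist_le (hd : ∀ x y : X, dist x y ≤ C) (k : ℕ) (x y : X) : supDist F k x y ≤ C :=
  have hC : 0 ≤ C := dist_nonneg.trans (hd x x)
  Real.iSup_le (fun _ => Real.iSup_le (fun _ => hd _ _) hC) hC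

theorem dist_le_supDist (hd : ∀ x y : X, dist x y ≤ C) {f : X → X} {k : ℕ} (hf : f ∈ famPow F k)
    (x y : X) : dist (f x) (f y) ≤ supDist F k x y := by
  have hbdd : BddAbove (Set.range fun f : X → X => ⨆ _ : f ∈ famPow F k, dist (f x) (f y)) :=
    ⟨C, Set.forall_mem_range.2 fun f => Real.iSup_le (fun _ => hd _ _) (dist_nonneg.trans (hd x x))⟩
  exact (le_ciSup_of_le hbdd f (ciSup_pos hf).ge :)

theorem supDist_comp_le (hd : ∀ x y : X, dist x y ≤ C) {g : X → X} {n : ℕ} (hg : g ∈ famPow F n)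
    (k : ℕ) (x y : X) : supDist F k (g x) (g y) ≤ supDist F (k + n) x y :=
  Real.iSup_le (fun _ => Real.iSup_le (fun hf => dist_le_supDist hd (famPow_comp_mem hf hg) x y)
    (supDist_nonneg _ _ _)) (supDist_nonneg _ _ _)

theorem rho_eq_tsum_supDist (hd : ∀ x y : X, dist x y ≤ C) {ε : ℝ} (hε : 0 < ε) (x y : X) :
    rho F ε x y = ∑' k, supDist F k x y / (1 + ε) ^ k := by
  rw [(summable_div_pow_of_le (supDist_nonneg · x y) (supDist_le hd · x y)
    (lt_add_of_pos_right 1 hε)).tsum_eq_zero_add, pow_zero, div_one, supDist_zero]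
  rfl

end supDist

theorem rho_pow_lipschitz_general [MetricSpace X] (F : Set (X → X)) (ε : ℝ)
    (hd : ∀ x y : X, dist x y ≤ 1) (hε : 0 < ε) :
    ∀ n : ℕ, 0 < n → ∀ g ∈ famPow F n, ∀ x y : X,
      rho F ε (g x) (g y) ≤ (1 + ε) ^ n * rho F ε x y := by
  intro n _ g hg x y
  have hA : 1 < 1 + ε := lt_add_of_pos_right 1 hε
  have hsummable : ∀ u : ℕ → ℝ, (∀ k, 0 ≤ u k) → (∀ k, u k ≤ 1) →
      Summable fun k => u k / (1 + ε) ^ k := fun u hu₀ huC => summable_div_pow_of_le hu₀ huC hA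
  rw [rho_eq_tsum_supDist hd hε, rho_eq_tsum_supDist hd hε]
  calc ∑' k, supDist F k (g x) (g y) / (1 + ε) ^ k
      ≤ ∑' k, supDist F (k + n) x y / (1 + ε) ^ k :=
        Summable.tsum_le_tsum (fun k => by gcongr; exact supDist_comp_le hd hg k x y)
          (hsummable _ (supDist_nonneg · _ _) (supDist_le hd · _ _))
          (hsummable _ (fun k => supDist_nonneg (k + n) x y) (fun k => supDist_le hd (k + n) x y))
    _ ≤ (1 + ε) ^ n * ∑' k, supDist F k x y / (1 + ε) ^ k :=
        tsum_shift_div_pow_le (supDist_nonneg · x y)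
          (hsummable _ (supDist_nonneg · _ _) (supDist_le hd · _ _)) (by positivity) n

theorem rho_pow_lipschitz [MetricSpace X] (F : Set (X → X)) (ε : ℝ)
    (hd : ∀ x y : X, dist x y ≤ 1) (hFc : ∀ f ∈ F, Continuous f)
    (hF : ∀ n : ℕ, 0 < n → PtEquicont (famPow F n)) (hε : 0 < ε) :
    ∀ n : ℕ, 0 < n → ∀ g ∈ famPow F n, ∀ x y : X,
      rho F ε (g x) (g y) ≤ (1 + ε) ^ n * rho F ε x y :=
  rho_pow_lipschitz_general F ε hd hε
end
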